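/- arXiv:1610.01987 — 2 statements merged into one kernel-verified Lean document; each statement's English description precedes it below -/
import Mathlib

section
/- For every integer n ≥ 1, D_n = n · Der_{n−1}. -/
/-!
Read the values cyclically, so that the forbidden patterns are the `n` successions
`i (i + 1) mod n`. By inclusion–exclusion, `D_n = ∑_S (-1)^|S| N(S)`, where `N(S)` counts the
arrangements containing every succession `i (i + 1)` with `i ∈ S`. No arrangement contains all
`n` of them, since the last entry has no successor. Otherwise, rotating the values we may assume
`n ∉ S`; then gluing `i + 1` to `i` for `i ∈ S`, the largest first, shows `N(S) = (n - |S|)!`.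
Hence `D_n = Der_n - (-1)^n = n · Der_{n-1}`.
-/

/-- The arrangement (one-line notation) of `σ` avoids all patterns
`12, 23, …, (n-1)n`: digit `i` (encoded as the value `i-1` in `Fin n`)
is never immediately followed by digit `i+1`. -/
def avoidsSucc (n : ℕ) (σ : Equiv.Perm (Fin n)) : Prop :=
  ∀ (k : ℕ) (h : k + 1 < n),
    (σ ⟨k + 1, h⟩).val ≠ (σ ⟨k, Nat.lt_of_succ_lt h⟩).val + 1

/-- The arrangement of `σ` contains the pattern `n1`: digit `n` (value `n-1`)
is immediately followed by digit `1` (value `0`). -/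
def containsN1 (n : ℕ) (σ : Equiv.Perm (Fin n)) : Prop :=
  ∃ (k : ℕ) (h : k + 1 < n),
    (σ ⟨k, Nat.lt_of_succ_lt h⟩).val = n - 1 ∧ (σ ⟨k + 1, h⟩).val = 0

/-- `dCount n` = number of arrangements of `{1,…,n}` avoiding `12, 23, …, (n-1)n`. -/
noncomputable def dCount (n : ℕ) : ℕ :=
  Nat.card {σ : Equiv.Perm (Fin n) // avoidsSucc n σ}

/-- `DCount n` = number of arrangements of `{1,…,n}` avoiding `12, 23, …, (n-1)n, n1`. -/
noncomputable def DCount (n : ℕ) : ℕ :=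
  Nat.card {σ : Equiv.Perm (Fin n) // avoidsSucc n σ ∧ ¬ containsN1 n σ}

open Equiv Finset
open scoped Nat

lemma Fin.eq_add_one_iff {m : ℕ} {a b : Fin (m + 1)} :
    b = a + 1 ↔ (b : ℕ) = a + 1 ∨ ((a : ℕ) = m ∧ (b : ℕ) = 0) := by
  rw [Fin.ext_iff, Fin.val_add_one]
  split_ifs with h <;> simp only [Fin.ext_iff, Fin.val_last] at h <;> omega

lemma Fin.val_succAbove_eq_succ_iff {n : ℕ} {p : Fin (n + 1)} {a b : Fin n} (hp : p ≠ a.succ) :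
    (p.succAbove b : ℕ) = p.succAbove a + 1 ↔ (b : ℕ) = a + 1 := by
  rw [Ne, Fin.ext_iff] at hp
  unfold Fin.succAbove
  split_ifs <;> simp only [Fin.lt_def, Fin.val_castSucc, Fin.val_succ] at * <;> omega

section ContainsSucc

variable {m : ℕ}

/-- Values are read cyclically: `i + 1` wraps around in `Fin (m + 1)`, so for `i = Fin.last m`
this is the pattern `n1`. -/
def ContainsSucc (σ : Perm (Fin (m + 1))) (i : Fin (m + 1)) : Prop :=
  ∃ k : Fin m, σ k.castSucc = i ∧ σ k.succ = i + 1

instance (σ : Perm (Fin (m + 1))) : DecidablePred (ContainsSucc σ) :=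
  fun _ => by unfold ContainsSucc; infer_instance

lemma forall_not_containsSucc_iff (σ : Perm (Fin (m + 1))) :
    (∀ i, ¬ ContainsSucc σ i) ↔ ∀ k : Fin m, σ k.succ ≠ σ k.castSucc + 1 := by
  simp only [ContainsSucc, not_exists, not_and]
  exact ⟨fun h k => h _ k rfl, fun h i k hk => hk ▸ h k⟩

lemma avoidsSucc_and_not_containsN1_iff (σ : Perm (Fin (m + 1))) :
    avoidsSucc (m + 1) σ ∧ ¬ containsN1 (m + 1) σ ↔ ∀ i, ¬ ContainsSucc σ i := by
  rw [forall_not_containsSucc_iff, avoidsSucc, containsN1]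
  simp only [ne_eq, Fin.eq_add_one_iff, not_or, not_exists, not_and, Fin.forall_iff,
    Nat.add_sub_cancel]
  constructor
  · rintro ⟨hs, hn⟩ k hk
    exact ⟨hs k (by omega), hn k (by omega)⟩
  · intro h
    exact ⟨fun k hk => (h k (by omega)).1, fun k hk => (h k (by omega)).2⟩

lemma containsSucc_iff_val (σ : Perm (Fin (m + 1))) (i : Fin (m + 1)) :
    ContainsSucc σ i ↔ (σ.symm (i + 1) : ℕ) = σ.symm i + 1 := by
  constructor
  · rintro ⟨k, rfl, hk⟩
    rw [← hk, symm_apply_apply, symm_apply_apply, Fin.val_succ, Fin.val_castSucc]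
  · intro h
    have hlt : (σ.symm i : ℕ) < m := by have := (σ.symm (i + 1)).isLt; omega
    refine ⟨⟨σ.symm i, hlt⟩, ?_, ?_⟩
    · rw [← eq_symm_apply]; rfl
    · rw [← eq_symm_apply]; exact Fin.ext h.symm

lemma containsSucc_trans_addRight (σ : Perm (Fin (m + 1))) (i t : Fin (m + 1)) :
    ContainsSucc (σ.trans (Equiv.addRight t)) (i + t) ↔ ContainsSucc σ i := by
  simp [ContainsSucc, add_right_comm _ t 1]

end ContainsSucc

section Insertion

variable {m : ℕ}

/-- Insert the value `i + 1` immediately after the value `i`, shifting the larger values up. -/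
def insertAfter (i : Fin (m + 1)) (σ : Perm (Fin (m + 1))) : Perm (Fin (m + 2)) :=
  (finSuccEquiv' (σ.symm i).succ).trans (σ.optionCongr.trans (finSuccEquiv' i.succ).symm)

/-- Delete the value `i + 1` (assumed to follow `i`), shifting the larger values down. -/
def contract (i : Fin (m + 1)) (τ : Perm (Fin (m + 2))) : Perm (Fin (m + 1)) :=
  removeNone ((finSuccEquiv' (τ.symm i.succ)).symm.trans (τ.trans (finSuccEquiv' i.succ)))

variable (i : Fin (m + 1)) (σ : Perm (Fin (m + 1)))

lemma insertAfter_apply_self : insertAfter i σ (σ.symm i).succ = i.succ := by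
  simp [insertAfter]

lemma insertAfter_apply_succAbove (x : Fin (m + 1)) :
    insertAfter i σ ((σ.symm i).succ.succAbove x) = i.succ.succAbove (σ x) := by
  simp [insertAfter]

lemma insertAfter_symm_apply_self : (insertAfter i σ).symm i.succ = (σ.symm i).succ := by
  rw [symm_apply_eq, insertAfter_apply_self]

lemma insertAfter_symm_apply_succAbove (v : Fin (m + 1)) :
    (insertAfter i σ).symm (i.succ.succAbove v) = (σ.symm i).succ.succAbove (σ.symm v) := by
  rw [symm_apply_eq, insertAfter_apply_succAbove, apply_symm_apply]

lemma containsSucc_insertAfter_self : ContainsSucc (insertAfter i σ) i.castSucc := by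
  rw [containsSucc_iff_val, Fin.coeSucc_eq_succ, insertAfter_symm_apply_self,
    ← Fin.succAbove_succ_self i, insertAfter_symm_apply_succAbove, Fin.succAbove_succ_self,
    Fin.val_succ, Fin.val_castSucc]

lemma containsSucc_insertAfter_iff {j : Fin (m + 1)} (hji : j < i) :
    ContainsSucc (insertAfter i σ) j.castSucc ↔ ContainsSucc σ j := by
  have hval : ((j + 1 : Fin (m + 1)) : ℕ) = j + 1 :=
    Fin.val_add_one_of_lt (lt_of_lt_of_le hji (Fin.le_last i))
  have hle : j + 1 ≤ i := by rw [Fin.le_def, hval]; exact hji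
  have h₁ : j.castSucc = i.succ.succAbove j := (Fin.succAbove_succ_of_le _ _ hji.le).symm
  have h₂ : j.castSucc + 1 = i.succ.succAbove (j + 1) := by
    rw [Fin.succAbove_succ_of_le _ _ hle, Fin.coeSucc_eq_succ, Fin.ext_iff, Fin.val_succ,
      Fin.val_castSucc, hval]
  rw [containsSucc_iff_val, containsSucc_iff_val, h₂, h₁, insertAfter_symm_apply_succAbove,
    insertAfter_symm_apply_succAbove]
  exact Fin.val_succAbove_eq_succ_iff (Fin.succ_injective _ |>.ne (σ.symm.injective.ne hji.ne'))

lemma contract_insertAfter : contract i (insertAfter i σ) = σ := by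
  rw [contract, insertAfter_symm_apply_self]
  convert removeNone_optionCongr σ
  ext x : 1
  simp [insertAfter]

variable {i} in
lemma insertAfter_contract {τ : Perm (Fin (m + 2))} (h : ContainsSucc τ i.castSucc) :
    insertAfter i (contract i τ) = τ := by
  set p := τ.symm i.succ
  set e : Perm (Option (Fin (m + 1))) :=
    (finSuccEquiv' p).symm.trans (τ.trans (finSuccEquiv' i.succ))
  have he : e none = none := by simp [e, p]
  have hopt : (contract i τ).optionCongr = e := by
    rw [contract, map_equiv_removeNone, he, swap_self]
    rfl
  have key : ∀ x, τ (p.succAbove x) = i.succ.succAbove (contract i τ x) := by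
    intro x
    have hx := congrArg (· (some x)) hopt
    simp only [optionCongr_apply, Option.map_some, e, trans_apply, finSuccEquiv'_symm_some] at hx
    rw [← (finSuccEquiv' i.succ).symm_apply_apply (τ _), ← hx, finSuccEquiv'_symm_some]
  set y := (contract i τ).symm i
  have hpos : p.succAbove y = τ.symm i.castSucc := by
    rw [eq_symm_apply, key, apply_symm_apply, Fin.succAbove_succ_self]
  have hp : (p : ℕ) = (p.succAbove y : ℕ) + 1 := by
    rw [hpos, ← (containsSucc_iff_val τ _).mp h, Fin.coeSucc_eq_succ]
  have hy : y.succ = p := by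
    rw [Fin.ext_iff, Fin.val_succ]
    unfold Fin.succAbove at hp
    split_ifs at hp with hlt <;>
      simp only [Fin.lt_def, Fin.val_castSucc, Fin.val_succ] at hp hlt <;> omega
  ext z : 1
  rcases eq_or_ne z p with rfl | hz
  · rw [← hy, insertAfter_apply_self, hy, apply_symm_apply]
  · obtain ⟨x, rfl⟩ := Fin.exists_succAbove_eq hz
    rw [← hy, insertAfter_apply_succAbove, hy, key]

end Insertion

section Counting

variable {m : ℕ}

def succCount (S : Finset (Fin (m + 1))) : ℕ :=
  #{σ : Perm (Fin (m + 1)) | ∀ i ∈ S, ContainsSucc σ i}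

lemma succCount_empty : succCount (∅ : Finset (Fin (m + 1))) = (m + 1)! := by
  simp [succCount, Fintype.card_perm]

lemma succCount_univ : succCount (univ : Finset (Fin (m + 1))) = 0 := by
  rw [succCount, card_eq_zero, filter_eq_empty_iff]
  intro σ _ h
  obtain ⟨k, hk, -⟩ := h (σ (Fin.last m)) (mem_univ _)
  exact Fin.castSucc_ne_last k (σ.injective hk)

lemma succCount_map_addRight (S : Finset (Fin (m + 1))) (t : Fin (m + 1)) :
    succCount (S.map (Equiv.addRight t).toEmbedding) = succCount S := by
  refine (card_equiv (Equiv.mulLeft (Equiv.addRight t)) fun σ => ?_).symm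
  simp only [mem_filter, mem_univ, true_and, forall_mem_map, coe_toEmbedding, coe_mulLeft,
    Perm.mul_def, coe_addRight, containsSucc_trans_addRight]

lemma succCount_insert_castSucc_map {i : Fin (m + 1)} {S : Finset (Fin (m + 1))}
    (hS : ∀ j ∈ S, j < i) :
    succCount (insert i.castSucc (S.map Fin.castSuccEmb)) = succCount S := by
  have hmem : ∀ σ, (∀ j ∈ insert i.castSucc (S.map Fin.castSuccEmb),
      ContainsSucc (insertAfter i σ) j) ↔ ∀ j ∈ S, ContainsSucc σ j := by
    intro σ
    simp only [forall_mem_insert, forall_mem_map, Fin.coe_castSuccEmb,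
      containsSucc_insertAfter_self, true_and]
    exact forall₂_congr fun j hj => containsSucc_insertAfter_iff i σ (hS j hj)
  refine (card_nbij' (insertAfter i) (contract i) ?_ ?_ ?_ ?_).symm
  · intro σ hσ
    rw [mem_coe, mem_filter] at hσ ⊢
    exact ⟨mem_univ _, (hmem σ).2 hσ.2⟩
  · intro τ hτ
    rw [mem_coe, mem_filter] at hτ ⊢
    rw [← insertAfter_contract (hτ.2 _ (mem_insert_self _ _)), hmem] at hτ
    exact ⟨mem_univ _, hτ.2⟩
  · intro σ _
    exact contract_insertAfter i σ
  · intro τ hτ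
    rw [mem_coe, mem_filter] at hτ
    exact insertAfter_contract (hτ.2 _ (mem_insert_self _ _))

lemma succCount_map_castSucc : ∀ {m : ℕ} (S : Finset (Fin m)),
    succCount (S.map Fin.castSuccEmb) = (m + 1 - #S)!
  | 0, S => by rw [S.eq_empty_of_isEmpty]; exact succCount_empty
  | m + 1, S => by
    rcases S.eq_empty_or_nonempty with rfl | hne
    · exact succCount_empty
    set i := S.max' hne
    have hlt : ∀ j ∈ S.erase i, j < i := fun j hj => S.lt_max'_of_mem_erase_max' hne hj
    obtain ⟨T, -, hT⟩ : ∃ T ⊆ univ, S.erase i = T.map Fin.castSuccEmb := by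
      refine subset_map_iff.mp fun j hj => ?_
      simpa [Fin.exists_castSucc_eq] using (lt_of_lt_of_le (hlt j hj) (Fin.le_last i)).ne
    have hcard : #S = #T + 1 := by
      rw [← card_erase_add_one (S.max'_mem hne), hT, card_map]
    rw [hcard, ← insert_erase (S.max'_mem hne), map_insert, Fin.coe_castSuccEmb,
      succCount_insert_castSucc_map (by simpa using hlt), hT, succCount_map_castSucc T]
    congr 1
    omega

lemma succCount_of_ne_univ {S : Finset (Fin (m + 1))} (hS : S ≠ univ) :
    succCount S = (m + 1 - #S)! := by
  obtain ⟨a, ha⟩ : ∃ a, a ∉ S := by simpa [eq_univ_iff_forall] using hS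
  set e := (Equiv.addRight (Fin.last m - a)).toEmbedding
  obtain ⟨T, -, hT⟩ : ∃ T ⊆ univ, S.map e = T.map Fin.castSuccEmb := by
    refine subset_map_iff.mp fun j hj => ?_
    obtain ⟨b, hb, rfl⟩ := mem_map.mp hj
    have hba : b ≠ a := fun h => ha (h ▸ hb)
    simpa [Fin.exists_castSucc_eq, e, add_sub_left_comm b, sub_eq_zero] using hba
  rw [← succCount_map_addRight S (Fin.last m - a), hT, succCount_map_castSucc,
    ← card_map e, hT, card_map]

end Counting

lemma succCount_eq {m : ℕ} (S : Finset (Fin (m + 1))) :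
    (succCount S : ℤ) = (m + 1 - #S)! - if S = univ then 1 else 0 := by
  split_ifs with h
  · simp [h, succCount_univ]
  · simp [succCount_of_ne_univ h]

lemma card_forall_not_containsSucc (m : ℕ) :
    (#{σ : Perm (Fin (m + 1)) | ∀ i, ¬ ContainsSucc σ i} : ℤ) =
      ∑ S ∈ (univ : Finset (Fin (m + 1))).powerset, (-1) ^ #S * (succCount S : ℤ) := by
  convert inclusion_exclusion_card_inf_compl univ
    fun i => ({σ | ContainsSucc σ i} : Finset (Perm (Fin (m + 1)))) using 4
  · ext σ
    simp [mem_inf]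
  · rw [succCount]
    congr 1
    ext σ
    simp [mem_inf]

lemma numDerangements_eq_sum_powerset (n : ℕ) :
    (numDerangements n : ℤ) =
      ∑ S ∈ (univ : Finset (Fin n)).powerset, (-1) ^ #S * ((n - #S)! : ℤ) := by
  rw [sum_powerset_apply_card (fun k => (-1 : ℤ) ^ k * ((n - k)! : ℤ)), numDerangements_sum,
    card_univ, Fintype.card_fin]
  refine sum_congr rfl fun k hk => ?_
  have hkn : k ≤ n := Nat.lt_succ_iff.mp (mem_range.mp hk)
  have hasc := Nat.ascFactorial_eq_factorial_mul_choose k (n - k)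
  rw [Nat.add_sub_cancel' hkn, Nat.choose_symm hkn] at hasc
  rw [hasc, nsmul_eq_mul]
  push_cast
  ring

lemma DCount_succ_eq_card (m : ℕ) :
    DCount (m + 1) = #{σ : Perm (Fin (m + 1)) | ∀ i, ¬ ContainsSucc σ i} := by
  rw [DCount, ← Fintype.card_subtype, ← Nat.card_eq_fintype_card]
  exact Nat.card_congr (subtypeEquivRight avoidsSucc_and_not_containsN1_iff)

theorem stmt_6 (n : ℕ) (hn : 1 ≤ n) :
    DCount n = n * numDerangements (n - 1) := by
  obtain ⟨m, rfl⟩ := Nat.exists_eq_add_of_le' hn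
  zify
  rw [DCount_succ_eq_card, card_forall_not_containsSucc]
  simp_rw [succCount_eq, mul_sub, sum_sub_distrib, mul_ite, mul_one, mul_zero, sum_ite_eq',
    mem_powerset_self, if_true, card_univ, Fintype.card_fin, ← numDerangements_eq_sum_powerset]
  rw [Nat.add_sub_cancel, numDerangements_succ, pow_succ]
  ring
end

section
/- For every integer n ≥ 2, Der_n = (n−1)·d_{n−1}; that is, the n-th derangement number equals n−1 times the number of arrangements of {1,…,n−1} avoiding all patterns 12, 23, …, (n−2)(n−1). -/
/-!
Call a pair of adjacent positions carrying consecutive values a succession, and let `a n` be the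
number of succession-free permutations of `Fin n`, so `a n = dCount n`. Deleting the largest value
from a succession-free permutation of `Fin (m + 2)` leaves a permutation of `Fin (m + 1)` that is
either succession-free (and the largest value may then go anywhere except right after `m`) or has
exactly one succession (which the largest value must split). Deleting the second entry of the
unique succession of a permutation of `Fin (m + 1)` leaves a succession-free permutation of
`Fin m` together with the position of the succession. Hence
`a (m + 2) = (m + 1) * a (m + 1) + m * a m`, which makes `m * a m` satisfy the derangement
recurrence `D (m + 3) = (m + 2) * (D (m + 1) + D (m + 2))` with `D 1 = 0` and `D 2 = 1`.
-/

open Equiv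

namespace Fin

variable {n : ℕ}

theorem covBy_iff_succ_eq_castSucc {a b : Fin n} : a ⋖ b ↔ a.succ = b.castSucc := by
  simp [Fin.ext_iff]

theorem val_succAbove (p : Fin (n + 1)) (a : Fin n) :
    (p.succAbove a : ℕ) = if (a : ℕ) < p then (a : ℕ) else a + 1 := by
  simp only [succAbove, lt_def, val_castSucc]
  split_ifs <;> rfl

theorem succAbove_covBy_succAbove_iff {p : Fin (n + 1)} {a b : Fin n} :
    p.succAbove a ⋖ p.succAbove b ↔ a ⋖ b ∧ b.castSucc ≠ p := by
  simp only [covBy_iff, Nat.covBy_iff_add_one_eq, ne_eq, Fin.ext_iff, val_castSucc, val_succAbove]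
  split_ifs <;> omega

theorem succAbove_covBy_iff {p : Fin (n + 1)} {a : Fin n} : p.succAbove a ⋖ p ↔ a.succ = p := by
  simp only [covBy_iff, Nat.covBy_iff_add_one_eq, Fin.ext_iff, val_succ, val_succAbove]
  split_ifs <;> omega

theorem covBy_succAbove_iff {p : Fin (n + 1)} {b : Fin n} :
    p ⋖ p.succAbove b ↔ b.castSucc = p := by
  simp only [covBy_iff, Nat.covBy_iff_add_one_eq, Fin.ext_iff, val_castSucc, val_succAbove]
  split_ifs <;> omega

end Fin

namespace Equiv.Perm

variable {n : ℕ}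

/-- `σ` has the pattern `i(i+1)` at the positions `j` and `k = j + 1`. -/
def IsSuccession (σ : Perm (Fin n)) (j k : Fin n) : Prop :=
  j ⋖ k ∧ σ j ⋖ σ k

def SuccessionFree (σ : Perm (Fin n)) : Prop :=
  ∀ j k, ¬ σ.IsSuccession j k

def HasUniqueSuccession (σ : Perm (Fin n)) : Prop :=
  ∃ j k, σ.IsSuccession j k ∧ ∀ j' k', σ.IsSuccession j' k' → k' = k

theorem not_isSuccession_self (σ : Perm (Fin n)) (j : Fin n) : ¬ σ.IsSuccession j j :=
  fun h ↦ h.1.lt.false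

theorem HasUniqueSuccession.not_successionFree {σ : Perm (Fin n)} (h : σ.HasUniqueSuccession) :
    ¬ σ.SuccessionFree :=
  fun hfree ↦ h.elim fun j ⟨k, hjk, _⟩ ↦ hfree j k hjk

theorem avoidsSucc_iff_successionFree (σ : Perm (Fin n)) :
    avoidsSucc n σ ↔ σ.SuccessionFree := by
  simp only [avoidsSucc, SuccessionFree, IsSuccession, Fin.covBy_iff, Nat.covBy_iff_add_one_eq]
  constructor
  · rintro h j ⟨k, hk⟩ ⟨hjk, hσ⟩
    obtain rfl : k = j + 1 := hjk.symm
    exact h j hk hσ.symm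
  · rintro h k hk hσ
    exact h ⟨k, by omega⟩ ⟨k + 1, hk⟩ ⟨rfl, hσ.symm⟩

/-- In one-line notation, `insertAt p v τ` is `τ` with every value `≥ v` raised by one and
the value `v` inserted at position `p`. -/
def insertAt (p v : Fin (n + 1)) (τ : Perm (Fin n)) : Perm (Fin (n + 1)) :=
  ((finSuccEquiv' p).trans (optionCongr τ)).trans (finSuccEquiv' v).symm

@[simp]
theorem insertAt_apply_self (p v : Fin (n + 1)) (τ : Perm (Fin n)) : insertAt p v τ p = v := by
  simp [insertAt]

@[simp]
theorem insertAt_apply_succAbove (p v : Fin (n + 1)) (τ : Perm (Fin n)) (j : Fin n) :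
    insertAt p v τ (p.succAbove j) = v.succAbove (τ j) := by
  simp [insertAt]

theorem insertAt_injective (p v : Fin (n + 1)) : Function.Injective (insertAt p v) := by
  intro τ τ' h
  exact Equiv.ext fun j ↦ by simpa using congr_arg (· (p.succAbove j)) h

theorem insertAt_bijective (v : Fin (n + 1)) :
    Function.Bijective fun x : Fin (n + 1) × Perm (Fin n) ↦ insertAt x.1 v x.2 := by
  refine (Fintype.bijective_iff_injective_and_card _).2 ⟨?_, ?_⟩
  · rintro ⟨p, τ⟩ ⟨p', τ'⟩ h
    obtain rfl : p = p' := (insertAt p v τ).injective <| by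
      simp only at h
      rw [insertAt_apply_self, h, insertAt_apply_self]
    simp only [Prod.mk.injEq, true_and]
    exact insertAt_injective p v h
  · simp [Fintype.card_perm, Nat.factorial_succ]

theorem exists_eq_insertAt (σ : Perm (Fin (n + 1))) (p : Fin (n + 1)) :
    ∃ τ, σ = insertAt p (σ p) τ := by
  obtain ⟨⟨p', τ⟩, h⟩ := (insertAt_bijective (σ p)).2 σ
  obtain rfl : p' = p := σ.injective <| by simpa using (DFunLike.congr_fun h p').symm
  exact ⟨τ, h.symm⟩

section insertAt

variable (p v : Fin (n + 1)) (τ : Perm (Fin n))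

theorem isSuccession_insertAt_succAbove_succAbove {a b : Fin n} :
    (insertAt p v τ).IsSuccession (p.succAbove a) (p.succAbove b) ↔
      τ.IsSuccession a b ∧ b.castSucc ≠ p ∧ (τ b).castSucc ≠ v := by
  simp only [IsSuccession, insertAt_apply_succAbove, Fin.succAbove_covBy_succAbove_iff]
  tauto

theorem isSuccession_insertAt_succAbove_self {a : Fin n} :
    (insertAt p v τ).IsSuccession (p.succAbove a) p ↔ a.succ = p ∧ (τ a).succ = v := by
  simp only [IsSuccession, insertAt_apply_succAbove, insertAt_apply_self,
    Fin.succAbove_covBy_iff]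

theorem isSuccession_insertAt_self_succAbove {b : Fin n} :
    (insertAt p v τ).IsSuccession p (p.succAbove b) ↔
      b.castSucc = p ∧ (τ b).castSucc = v := by
  simp only [IsSuccession, insertAt_apply_succAbove, insertAt_apply_self,
    Fin.covBy_succAbove_iff]

theorem successionFree_insertAt_iff :
    (insertAt p v τ).SuccessionFree ↔
      (∀ a b, τ.IsSuccession a b → b.castSucc = p ∨ (τ b).castSucc = v) ∧
      (∀ a, a.succ = p → (τ a).succ ≠ v) ∧
      ∀ b, b.castSucc = p → (τ b).castSucc ≠ v := by
  simp only [SuccessionFree, p.forall_iff_succAbove, isSuccession_insertAt_succAbove_succAbove,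
    isSuccession_insertAt_succAbove_self, isSuccession_insertAt_self_succAbove,
    not_isSuccession_self, not_false_eq_true, not_and, true_and, forall_and, ne_eq, not_not,
    or_iff_not_imp_left]
  tauto

end insertAt

theorem successionFree_insertAt_last_iff {m : ℕ} (p : Fin (m + 2)) (τ : Perm (Fin (m + 1))) :
    (insertAt p (Fin.last _) τ).SuccessionFree ↔
      (∀ a b, τ.IsSuccession a b → b.castSucc = p) ∧ p ≠ (τ.symm (Fin.last m)).succ := by
  simp only [successionFree_insertAt_iff, Fin.castSucc_ne_last, or_false, ne_eq,
    not_false_eq_true, implies_true, and_true]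
  simp only [← Fin.succ_last, Fin.succ_inj]
  refine and_congr_right fun _ ↦ ⟨fun h hp ↦ h _ hp.symm (by simp), ?_⟩
  rintro h a rfl hτ
  simp [← hτ] at h

open Classical in
theorem card_successionFree_insertAt_last {m : ℕ} (τ : Perm (Fin (m + 1))) :
    Nat.card {p : Fin (m + 2) // (insertAt p (Fin.last _) τ).SuccessionFree} =
      (if τ.SuccessionFree then m + 1 else 0) + if τ.HasUniqueSuccession then 1 else 0 := by
  simp only [successionFree_insertAt_last_iff]
  by_cases hfree : τ.SuccessionFree
  · rw [Nat.card_congr <| Equiv.subtypeEquivRight fun _ ↦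
      and_iff_right fun a b hab ↦ (hfree a b hab).elim]
    simp [hfree, mt HasUniqueSuccession.not_successionFree, Fintype.card_subtype_compl,
      Nat.card_eq_fintype_card]
  by_cases huniq : τ.HasUniqueSuccession
  · obtain ⟨j, k, hjk, hk⟩ := id huniq
    have (p : Fin (m + 2)) : ((∀ a b, τ.IsSuccession a b → b.castSucc = p) ∧
        p ≠ (τ.symm (Fin.last m)).succ) ↔ p = k.castSucc := by
      refine ⟨fun h ↦ (h.1 j k hjk).symm, ?_⟩
      rintro rfl
      refine ⟨fun a b hab ↦ by rw [hk a b hab], fun h ↦ ?_⟩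
      rw [← Fin.covBy_iff_succ_eq_castSucc.1 hjk.1, Fin.succ_inj] at h
      exact (Fin.le_last _).not_gt (by simpa [h] using hjk.2.lt)
    rw [Nat.card_congr (Equiv.subtypeEquivRight this)]
    simp [hfree, huniq]
  · obtain ⟨j, k, hjk⟩ : ∃ j k, τ.IsSuccession j k := by simpa [SuccessionFree] using hfree
    have (p : Fin (m + 2)) : ¬ ((∀ a b, τ.IsSuccession a b → b.castSucc = p) ∧
        p ≠ (τ.symm (Fin.last m)).succ) := fun h ↦
      huniq ⟨j, k, hjk, fun j' k' h' ↦
        Fin.castSucc_injective _ ((h.1 j' k' h').trans (h.1 j k hjk).symm)⟩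
    simp [this, hfree, huniq]

theorem card_successionFree_add_two (m : ℕ) :
    Nat.card {σ : Perm (Fin (m + 2)) // σ.SuccessionFree} =
      (m + 1) * Nat.card {τ : Perm (Fin (m + 1)) // τ.SuccessionFree} +
        Nat.card {τ : Perm (Fin (m + 1)) // τ.HasUniqueSuccession} := by
  classical
  calc Nat.card {σ : Perm (Fin (m + 2)) // σ.SuccessionFree}
      = Nat.card {x : Fin (m + 2) × Perm (Fin (m + 1)) //
          (insertAt x.1 (Fin.last _) x.2).SuccessionFree} :=
        (Nat.card_congr <| (Equiv.ofBijective _ (insertAt_bijective _)).subtypeEquiv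
          fun _ ↦ Iff.rfl).symm
    _ = ∑ τ : Perm (Fin (m + 1)),
          Nat.card {p : Fin (m + 2) // (insertAt p (Fin.last _) τ).SuccessionFree} := by
        simp only [Nat.card_eq_fintype_card, Fintype.card_subtype, Finset.card_filter,
          Fintype.sum_prod_type_right]
    _ = _ := by
        simp only [card_successionFree_insertAt_last, Finset.sum_add_distrib]
        simp [Finset.sum_ite, Fintype.card_subtype, mul_comm, Nat.card_eq_fintype_card]

theorem isSuccession_insertAt_succ_iff {ρ : Perm (Fin n)} (hρ : ρ.SuccessionFree) (a : Fin n)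
    {j k : Fin (n + 1)} :
    (insertAt a.succ (ρ a).succ ρ).IsSuccession j k ↔ j = a.castSucc ∧ k = a.succ := by
  obtain rfl | ⟨a', rfl⟩ := a.succ.eq_self_or_eq_succAbove j <;>
    obtain rfl | ⟨b, rfl⟩ := a.succ.eq_self_or_eq_succAbove k
  · simp [not_isSuccession_self, Fin.ext_iff]
  · refine iff_of_false (fun h ↦ ?_) fun h ↦ (Fin.castSucc_lt_succ (i := a)).ne' h.1
    rw [isSuccession_insertAt_self_succAbove] at h
    exact hρ a b ⟨Fin.covBy_iff_succ_eq_castSucc.2 h.1.symm,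
      Fin.covBy_iff_succ_eq_castSucc.2 h.2.symm⟩
  · simp only [isSuccession_insertAt_succAbove_self, Fin.succ_inj, ← Fin.succAbove_succ_self a,
      Fin.succAbove_right_inj, and_true, and_iff_left_iff_imp]
    exact congr_arg ρ
  · simp [isSuccession_insertAt_succAbove_succAbove, hρ a' b, Fin.succAbove_ne]

theorem successionFree_of_isSuccession_insertAt {τ : Perm (Fin n)} {a : Fin n}
    (h : ∀ j k, (insertAt a.succ (τ a).succ τ).IsSuccession j k → k = a.succ) :
    τ.SuccessionFree := by
  intro a' b hab
  have hσ (hb : b.castSucc = a.succ) (hτb : (τ b).castSucc = (τ a).succ) : False :=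
    Fin.succAbove_ne _ _ (h _ _ ((isSuccession_insertAt_self_succAbove _ _ _).2 ⟨hb, hτb⟩))
  have hpos := Fin.covBy_iff_succ_eq_castSucc.1 hab.1
  have hval := Fin.covBy_iff_succ_eq_castSucc.1 hab.2
  by_cases hb : b.castSucc = a.succ
  · obtain rfl : a' = a := Fin.succ_injective _ (hpos.trans hb)
    exact hσ hb hval.symm
  by_cases hτb : (τ b).castSucc = (τ a).succ
  · obtain rfl : a' = a := τ.injective (Fin.succ_injective _ (hval.trans hτb))
    exact hb hpos.symm
  exact Fin.succAbove_ne _ _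
    (h _ _ ((isSuccession_insertAt_succAbove_succAbove _ _ _).2 ⟨hab, hb, hτb⟩))

theorem card_hasUniqueSuccession_succ (n : ℕ) :
    Nat.card {σ : Perm (Fin (n + 1)) // σ.HasUniqueSuccession} =
      n * Nat.card {ρ : Perm (Fin n) // ρ.SuccessionFree} := by
  have hmem (x : Fin n × {ρ : Perm (Fin n) // ρ.SuccessionFree}) :
      (insertAt x.1.succ (x.2.1 x.1).succ x.2).HasUniqueSuccession :=
    ⟨_, _, (isSuccession_insertAt_succ_iff x.2.2 x.1).2 ⟨rfl, rfl⟩,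
      fun _ _ h ↦ ((isSuccession_insertAt_succ_iff x.2.2 x.1).1 h).2⟩
  rw [← Nat.card_fin n, ← Nat.card_prod, Nat.card_fin]
  refine (Nat.card_congr (Equiv.ofBijective (fun x ↦ ⟨_, hmem x⟩) ⟨?_, ?_⟩)).symm
  · rintro ⟨a, ρ, hρ⟩ ⟨a', ρ', hρ'⟩ h
    replace h : insertAt a.succ (ρ a).succ ρ = insertAt a'.succ (ρ' a').succ ρ' :=
      congr_arg Subtype.val h
    obtain rfl : a = a' := Fin.succ_injective _ ((isSuccession_insertAt_succ_iff hρ' a').1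
      (h ▸ (isSuccession_insertAt_succ_iff hρ a).2 ⟨rfl, rfl⟩)).2
    have hv : ρ a = ρ' a := Fin.succ_injective _ <| by
      simpa using congr_arg (· a.succ) h
    rw [hv] at h
    simp [insertAt_injective _ _ h]
  · rintro ⟨σ, j, k, hjk, hk⟩
    obtain ⟨τ, hτ⟩ := exists_eq_insertAt σ k
    generalize σ k = v at hτ
    subst hτ
    obtain rfl | ⟨a, rfl⟩ := k.eq_self_or_eq_succAbove j
    · exact (not_isSuccession_self _ _ hjk).elim
    obtain ⟨rfl, rfl⟩ := (isSuccession_insertAt_succAbove_self _ _ _).1 hjk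
    exact ⟨(a, ⟨τ, successionFree_of_isSuccession_insertAt hk⟩), rfl⟩

end Equiv.Perm

open Equiv.Perm

theorem dCount_eq_card_successionFree (n : ℕ) :
    dCount n = Nat.card {σ : Perm (Fin n) // σ.SuccessionFree} :=
  Nat.card_congr (Equiv.subtypeEquivRight avoidsSucc_iff_successionFree)

theorem dCount_one : dCount 1 = 1 := by
  simp [dCount, avoidsSucc]

theorem dCount_add_two (m : ℕ) : dCount (m + 2) = (m + 1) * dCount (m + 1) + m * dCount m := by
  simp only [dCount_eq_card_successionFree, card_successionFree_add_two,
    card_hasUniqueSuccession_succ]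

theorem numDerangements_succ_eq_mul_dCount : ∀ m : ℕ, numDerangements (m + 1) = m * dCount m
  | 0 => by simp
  | 1 => by simp [dCount_one, numDerangements_add_two]
  | m + 2 => by
    rw [show m + 2 + 1 = m + 1 + 2 from rfl, numDerangements_add_two,
      numDerangements_succ_eq_mul_dCount m, numDerangements_succ_eq_mul_dCount (m + 1),
      dCount_add_two]
    ring

theorem stmt_11 (n : ℕ) (hn : 2 ≤ n) :
    numDerangements n = (n - 1) * dCount (n - 1) := by
  obtain ⟨m, rfl⟩ : ∃ m, n = m + 1 := ⟨n - 1, by omega⟩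
  exact numDerangements_succ_eq_mul_dCount m
end
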